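/- Let t ∈ ℝ be such that β_X < h(t) < ∞ and the interior of 𝓓_t is nonempty. Then x ↦ M_x(t) is right-continuous on [0,∞), and for every ε > 0 with h(t) + ε in the interior of 𝓓_t, there exists K_ε > 0 such that M_x(t) ≤ K_ε e^{(h(t)+ε)x} for all x > 0. Furthermore, if either h(t) ≥ 0 or ε < |h(t)|, one may take K_ε = H(h(t))/(1 − ρ(t, ε)), where H(a) = E[e^{−(0∧a)X}] + 1 and ρ(t, ε) = E[e^{tY − (h(t)+ε)X}]. -/

import Mathlib

open MeasureTheory ProbabilityTheory Real Set Filter Asymptotics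
open scoped ENNReal

noncomputable section

/-- `N(x)`: the largest `n` such that all partial sums `X_1 + ⋯ + X_k`, `k ≤ n`, are `≤ x`
(interpreted via `sSup`; it equals `0` if `X_1 > x`). -/
def NN {Ω : Type} (Xn : ℕ → Ω → ℝ) (x : ℝ) (ω : Ω) : ℕ :=
  sSup {n : ℕ | ∀ k ≤ n, ∑ i ∈ Finset.range k, Xn i ω ≤ x}

/-- `W(x) = Y_1 + ⋯ + Y_{N(x)}`, the renewal reward process. -/
def WW {Ω : Type} (Xn Yn : ℕ → Ω → ℝ) (x : ℝ) (ω : Ω) : ℝ :=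
  ∑ i ∈ Finset.range (NN Xn x ω), Yn i ω

/-- `M_x(t) = E[e^{t W(x)}]`, as an extended-real valued integral. -/
def MgfW {Ω : Type} [MeasurableSpace Ω] (P : Measure Ω) (Xn Yn : ℕ → Ω → ℝ) (x t : ℝ) : ℝ≥0∞ :=
  ∫⁻ ω, ENNReal.ofReal (Real.exp (t * WW Xn Yn x ω)) ∂P

/-- `𝓓_t = {s : E[e^{tY - sX}] ≤ 1}`. -/
def Dset {Ω : Type} [MeasurableSpace Ω] (P : Measure Ω) (X Y : Ω → ℝ) (t : ℝ) : Set ℝ :=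
  {s : ℝ | ∫⁻ ω, ENNReal.ofReal (Real.exp (t * Y ω - s * X ω)) ∂P ≤ 1}

/-- `h(t) = inf 𝓓_t`. -/
def hfun {Ω : Type} [MeasurableSpace Ω] (P : Measure Ω) (X Y : Ω → ℝ) (t : ℝ) : ℝ :=
  sInf (Dset P X Y t)

/-- `h*(ν) = sup_t (νt - h(t))`, the convex conjugate of `h`. -/
def hstar {Ω : Type} [MeasurableSpace Ω] (P : Measure Ω) (X Y : Ω → ℝ) (ν : ℝ) : ℝ :=
  ⨆ t : ℝ, (ν * t - hfun P X Y t)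

/-- `β_X = limsup_{x → ∞} (1/x) log Pr{X > x}`, as an extended real number. -/
def betaX {Ω : Type} [MeasurableSpace Ω] (P : Measure Ω) (X : Ω → ℝ) : EReal :=
  Filter.limsup (fun x : ℝ => ((Real.log (P {ω | x < X ω}).toReal / x : ℝ) : EReal)) Filter.atTop

/-- The (topological) support of a measure on `ℝ`. -/
def msupport (μ : Measure ℝ) : Set ℝ := {x | ∀ U ∈ nhds x, 0 < μ U}

/-- `B(X,t)` of the paper. -/
def Bfun {Ω : Type} [MeasurableSpace Ω] (P : Measure Ω) (X Y : Ω → ℝ)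
    (Xn Yn : ℕ → Ω → ℝ) (g : ℝ → ℝ → ℝ) (t : ℝ) : ℝ :=
  (∫ x in Set.Ioi (0:ℝ), Real.exp (-(hfun P X Y t) * x) * (P {ω | x < X ω}).toReal) -
  (∫ x in Set.Iio (0:ℝ),
      (∫ u in Set.Ioo (0:ℝ) |x|,
        g t x * (MgfW P Xn Yn u t).toReal * Real.exp (-(hfun P X Y t) * (x + u)))
    ∂(Measure.map X P))

/-- `φ(t) = B(X,t) / E[X e^{tY - h(t)X}]` of the paper. -/
def phifun {Ω : Type} [MeasurableSpace Ω] (P : Measure Ω) (X Y : Ω → ℝ)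
    (Xn Yn : ℕ → Ω → ℝ) (g : ℝ → ℝ → ℝ) (t : ℝ) : ℝ :=
  Bfun P X Y Xn Yn g t / ∫ ω, X ω * Real.exp (t * Y ω - hfun P X Y t * X ω) ∂P

/-!
Let `n = N(x)` and `Sₖ = X₁ + ⋯ + Xₖ`, so that `Sₙ ≤ x < Sₙ + Xₙ₊₁`. With `c = -(0 ∧ h(t)) ≥ 0`
and any `s > h(t)`, hence `s ≥ -c`, the overshoot estimate `s Sₙ ≤ s x + c Xₙ₊₁` gives
`e^{t W(x)} ≤ e^{s x} ∏_{i ≤ n} e^{t Yᵢ - s Xᵢ} · e^{c Xₙ₊₁}`, and summing over all possible values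
of `n` removes the dependence on `N(x)`. By independence the mean of that sum is
`Σₙ ρⁿ E[e^{cX}] = E[e^{cX}] / (1 - ρ)` with `ρ = E[e^{tY - sX}]`. Here `ρ < 1` for `s` interior
to `𝓓_t` by strict convexity (`X` is nondegenerate), and `E[e^{cX}] < ∞` because either `c = 0`
or `-c = h(t) > β_X`.
The same sum does not depend on `x`, and `W(u) = W(x)` for `u` slightly above `x`, so dominated
convergence gives right-continuity.
-/

open scoped Topology

namespace Nat

theorem sSup_setOf_forall_le_spec {q : ℕ → Prop} (h0 : q 0) (hfin : ∃ m, ¬ q m) :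
    (∀ k ≤ sSup {n | ∀ k ≤ n, q k}, q k) ∧ ¬ q (sSup {n | ∀ k ≤ n, q k} + 1) := by
  obtain ⟨m, hm⟩ := hfin
  have hbdd : BddAbove {n | ∀ k ≤ n, q k} :=
    ⟨m, fun n hn => le_of_not_gt fun hmn => hm (hn m hmn.le)⟩
  have hmem := Nat.sSup_mem ⟨0, fun k hk => (Nat.le_zero.1 hk) ▸ h0⟩ hbdd
  refine ⟨hmem, fun hsucc => ?_⟩
  have : sSup {n | ∀ k ≤ n, q k} + 1 ≤ sSup {n | ∀ k ≤ n, q k} :=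
    le_csSup hbdd fun k hk => (Nat.le_succ_iff.1 hk).elim (hmem k) (· ▸ hsucc)
  omega

theorem sSup_setOf_forall_le_eq {q : ℕ → Prop} {n : ℕ} (h : ∀ k ≤ n, q k) (hn : ¬ q (n + 1)) :
    sSup {n | ∀ k ≤ n, q k} = n :=
  IsGreatest.csSup_eq ⟨h, fun _ hm => le_of_not_gt fun hnm => hn (hm (n + 1) hnm)⟩

end Nat

theorem measurable_sSup_setOf {α : Type*} [MeasurableSpace α] {p : ℕ → α → Prop}
    (hp : ∀ n, Measurable (p n)) : Measurable fun a => sSup {n | p n a} := by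
  refine measurable_of_Iic fun m => ?_
  have hset : (fun a => sSup {n | p n a}) ⁻¹' Iic m =
      {a | ¬ BddAbove {n | p n a} ∨ ∀ n, p n a → n ≤ m} := by
    ext a
    by_cases hb : BddAbove {n | p n a}
    · simp [hb, csSup_le_iff' hb]
    · simp [hb]
  rw [hset]
  simp only [bddAbove_def]
  exact measurableSet_setOfPred.2 (by fun_prop)

theorem exists_csInf_lt_mem_interior {S : Set ℝ} (hS : BddBelow S) (hint : (interior S).Nonempty) :
    ∃ s, sInf S < s ∧ s ∈ interior S := by
  obtain ⟨s₀, hs₀⟩ := hint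
  obtain ⟨s, hs₀s, hs⟩ := Filter.Eventually.exists_gt (isOpen_interior.mem_nhds hs₀)
  exact ⟨s, (csInf_le hS (interior_subset hs₀)).trans_lt hs₀s, hs⟩

theorem exists_nat_lt_le_add_one {d : ℝ} (hd : 0 < d) : ∃ n : ℕ, (n : ℝ) < d ∧ d ≤ n + 1 := by
  have hceil : 0 < ⌈d⌉₊ := Nat.ceil_pos.2 hd
  refine ⟨⌈d⌉₊ - 1, ?_, ?_⟩ <;> rw [Nat.cast_pred hceil]
  · linarith [Nat.ceil_lt_add_one (R := ℝ) hd.le]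
  · linarith [Nat.le_ceil d]

theorem exp_add_exp_eq (a b : ℝ) :
    exp a + exp b = 2 * exp ((a + b) / 2) + (exp (a / 2) - exp (b / 2)) ^ 2 := by
  have ha : exp a = exp (a / 2) ^ 2 := by rw [← exp_nat_mul]; ring_nf
  have hb : exp b = exp (b / 2) ^ 2 := by rw [← exp_nat_mul]; ring_nf
  have hab : exp ((a + b) / 2) = exp (a / 2) * exp (b / 2) := by rw [← exp_add]; ring_nf
  rw [ha, hb, hab]
  ring

theorem mul_le_mul_add_mul_of_le_of_lt_add {s c S x ξ : ℝ} (hc : 0 ≤ c) (hsc : -s ≤ c)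
    (hS : S ≤ x) (hx : x < S + ξ) : s * S ≤ s * x + c * ξ := by
  rcases le_or_gt 0 s with hs | hs <;> nlinarith

section IndependentProducts

variable {Ω E : Type*} [MeasurableSpace Ω] [MeasurableSpace E] {P : Measure Ω} {μ : Measure E}
  {ξ : ℕ → Ω → E} {f g : E → ℝ≥0∞}

theorem lintegral_prod_range_mul_of_iIndepFun (hξ : ∀ i, Measurable (ξ i))
    (hind : iIndepFun ξ P) (hdist : ∀ i, P.map (ξ i) = μ) (hf : Measurable f)
    (hg : Measurable g) (n : ℕ) :
    ∫⁻ ω, (∏ i ∈ Finset.range n, f (ξ i ω)) * g (ξ n ω) ∂P =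
      (∫⁻ z, f z ∂μ) ^ n * ∫⁻ z, g z ∂μ := by
  classical
  set v : ℕ → E → ℝ≥0∞ := fun i => if i = n then g else f
  have hv : ∀ i, Measurable (v i) := fun i => by
    by_cases hi : i = n <;> simp [v, hi, hf, hg]
  have hv_lt : ∀ i ∈ Finset.range n, v i = f := fun i hi =>
    if_neg (Finset.mem_range.1 hi).ne
  have hv_n : v n = g := if_pos rfl
  calc ∫⁻ ω, (∏ i ∈ Finset.range n, f (ξ i ω)) * g (ξ n ω) ∂P
      = ∫⁻ ω, ∏ i ∈ Finset.range (n + 1), v i (ξ i ω) ∂P := by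
        refine lintegral_congr fun ω => ?_
        rw [Finset.prod_range_succ, hv_n]
        congr 1
        exact Finset.prod_congr rfl fun i hi => by rw [hv_lt i hi]
    _ = ∏ i ∈ Finset.range (n + 1), ∫⁻ z, v i z ∂μ := by
        have hprod := lintegral_prod_eq_prod_lintegral_of_indepFun (Finset.range (n + 1)) _
          (hind.comp v hv) fun i => (hv i).comp (hξ i)
        simp only [Function.comp_apply] at hprod
        rw [hprod]
        refine Finset.prod_congr rfl fun i _ => ?_
        rw [← hdist i, lintegral_map (hv i) (hξ i)]
    _ = (∫⁻ z, f z ∂μ) ^ n * ∫⁻ z, g z ∂μ := by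
        rw [Finset.prod_range_succ, hv_n, Finset.prod_congr rfl fun i hi => by rw [hv_lt i hi],
          Finset.prod_const, Finset.card_range]

def renewalSum (f g : E → ℝ≥0∞) (ξ : ℕ → Ω → E) (ω : Ω) : ℝ≥0∞ :=
  ∑' n, (∏ i ∈ Finset.range n, f (ξ i ω)) * g (ξ n ω)

theorem measurable_renewalSum (hξ : ∀ i, Measurable (ξ i)) (hf : Measurable f)
    (hg : Measurable g) : Measurable (renewalSum f g ξ) :=
  .tsum fun _ => by fun_prop

theorem lintegral_renewalSum (hξ : ∀ i, Measurable (ξ i)) (hind : iIndepFun ξ P)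
    (hdist : ∀ i, P.map (ξ i) = μ) (hf : Measurable f) (hg : Measurable g) :
    ∫⁻ ω, renewalSum f g ξ ω ∂P = (1 - ∫⁻ z, f z ∂μ)⁻¹ * ∫⁻ z, g z ∂μ := by
  unfold renewalSum
  rw [lintegral_tsum fun n => by fun_prop]
  simp_rw [lintegral_prod_range_mul_of_iIndepFun hξ hind hdist hf hg]
  rw [ENNReal.tsum_mul_right, ENNReal.tsum_geometric]

end IndependentProducts

section ExponentialTail

variable {Ω : Type} [MeasurableSpace Ω] {P : Measure Ω} [IsFiniteMeasure P] {X : Ω → ℝ}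

theorem eventually_measure_lt_le_exp_of_betaX_lt {r : ℝ} (hβ : betaX P X < r) :
    ∀ᶠ u in atTop, P {ω | u < X ω} ≤ ENNReal.ofReal (exp (r * u)) := by
  filter_upwards [eventually_lt_of_limsup_lt hβ, eventually_gt_atTop 0] with u hu hu0
  rw [EReal.coe_lt_coe_iff, div_lt_iff₀ hu0] at hu
  rcases eq_or_ne (P {ω | u < X ω}) 0 with h0 | h0
  · simp [h0]
  rw [← ENNReal.ofReal_toReal (measure_ne_top P _)]
  exact ENNReal.ofReal_le_ofReal
    ((log_lt_iff_lt_exp (ENNReal.toReal_pos h0 (measure_ne_top P _))).1 (by linarith)).le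

/-- Discretising `{X > x₀}` into the slabs `(x₀ + n, x₀ + n + 1]` turns an exponential tail bound
with rate `r < -c` into a convergent geometric series dominating `E[e^{cX}]`. -/
theorem lintegral_exp_mul_lt_top_of_tail_le (hX : Measurable X) {c r : ℝ} (hc : 0 ≤ c)
    (hcr : c + r < 0) (htail : ∀ᶠ u in atTop, P {ω | u < X ω} ≤ ENNReal.ofReal (exp (r * u))) :
    ∫⁻ ω, ENNReal.ofReal (exp (c * X ω)) ∂P < ∞ := by
  obtain ⟨x₀, hx₀⟩ := eventually_atTop.1 htail
  set slab := fun (n : ℕ) => {ω | x₀ + n < X ω}.indicator fun _ =>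
    ENNReal.ofReal (exp (c * (x₀ + n + 1)))
  have hpointwise : ∀ ω, ENNReal.ofReal (exp (c * X ω)) ≤
      ENNReal.ofReal (exp (c * x₀)) + ∑' n, slab n ω := by
    intro ω
    rcases le_or_gt (X ω) x₀ with hle | hlt
    · exact le_add_right (by gcongr)
    obtain ⟨n, hn_lt, hn_le⟩ := exists_nat_lt_le_add_one (sub_pos.2 hlt)
    calc ENNReal.ofReal (exp (c * X ω)) ≤ slab n ω := by
          simp only [slab]
          rw [indicator_of_mem (show ω ∈ {ω | x₀ + n < X ω} from show x₀ + n < X ω by linarith)]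
          gcongr
          linarith
      _ ≤ ∑' n, slab n ω := ENNReal.le_tsum n
      _ ≤ _ := le_add_self
  set q := ENNReal.ofReal (exp (c + r))
  have hq : q < 1 := by
    rw [← ENNReal.ofReal_one]
    exact (ENNReal.ofReal_lt_ofReal_iff one_pos).2 (exp_lt_one_iff.2 hcr)
  have hslab : ∀ n, ∫⁻ ω, slab n ω ∂P ≤ ENNReal.ofReal (exp (c * (x₀ + 1) + r * x₀)) * q ^ n := by
    intro n
    rw [lintegral_indicator_const (measurableSet_lt measurable_const hX),
      ← ENNReal.ofReal_pow (exp_pos _).le, ← ENNReal.ofReal_mul (exp_pos _).le, ← exp_nat_mul,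
      ← exp_add]
    calc ENNReal.ofReal (exp (c * (x₀ + n + 1))) * P {ω | x₀ + n < X ω}
        ≤ ENNReal.ofReal (exp (c * (x₀ + n + 1))) * ENNReal.ofReal (exp (r * (x₀ + n))) := by
          gcongr
          exact hx₀ _ (le_add_of_nonneg_right n.cast_nonneg)
      _ = _ := by rw [← ENNReal.ofReal_mul (exp_pos _).le, ← exp_add]; ring_nf
  calc ∫⁻ ω, ENNReal.ofReal (exp (c * X ω)) ∂P
      ≤ ∫⁻ ω, (ENNReal.ofReal (exp (c * x₀)) + ∑' n, slab n ω) ∂P := lintegral_mono hpointwise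
    _ = ENNReal.ofReal (exp (c * x₀)) * P univ + ∑' n, ∫⁻ ω, slab n ω ∂P := by
        rw [lintegral_add_left measurable_const, lintegral_const,
          lintegral_tsum fun n => (measurable_const.indicator
            (measurableSet_lt measurable_const hX)).aemeasurable]
    _ ≤ ENNReal.ofReal (exp (c * x₀)) * P univ +
          ENNReal.ofReal (exp (c * (x₀ + 1) + r * x₀)) * (1 - q)⁻¹ := by
        rw [← ENNReal.tsum_geometric, ← ENNReal.tsum_mul_left]
        gcongr with n
        exact hslab n
    _ < ∞ := by
        have : (1 - q)⁻¹ ≠ ∞ := ENNReal.inv_ne_top.2 (tsub_pos_of_lt hq).ne'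
        finiteness

theorem lintegral_exp_neg_min_mul_lt_top (hX : Measurable X) {h : ℝ} (hβ : betaX P X < h) :
    ∫⁻ ω, ENNReal.ofReal (exp (-min 0 h * X ω)) ∂P < ∞ := by
  rcases le_or_gt 0 h with hh | hh
  · simp [min_eq_left hh]
  obtain ⟨r, hβr, hrh⟩ := EReal.lt_iff_exists_real_btwn.1 hβ
  rw [min_eq_right hh.le]
  exact lintegral_exp_mul_lt_top_of_tail_le hX (by linarith)
    (by linarith [EReal.coe_lt_coe_iff.1 hrh]) (eventually_measure_lt_le_exp_of_betaX_lt hβr)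

end ExponentialTail

section TiltedMoment

variable {Ω : Type} [MeasurableSpace Ω] {P : Measure Ω} {X Y : Ω → ℝ} {t s : ℝ}

theorem integral_exp_eq_toReal_lintegral {f : Ω → ℝ} (hf : Measurable f) :
    ∫ ω, exp (f ω) ∂P = (∫⁻ ω, ENNReal.ofReal (exp (f ω)) ∂P).toReal :=
  integral_eq_lintegral_of_nonneg_ae (.of_forall fun _ => (exp_pos _).le)
    (by fun_prop : Measurable fun ω => exp (f ω)).aestronglyMeasurable

/-- The midpoint-convexity defect of `a ↦ E[e^{tY - aX}]` between `s ± δ/2` is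
`E[(e^{p/2} - e^{q/2})²]`, which vanishes only if `X = 0` almost surely. -/
theorem lintegral_exp_lt_one_of_mem_interior (hX : Measurable X) (hY : Measurable Y)
    (hX0 : ¬ ∀ᵐ ω ∂P, X ω = 0) (hs : s ∈ interior (Dset P X Y t)) :
    ∫⁻ ω, ENNReal.ofReal (exp (t * Y ω - s * X ω)) ∂P < 1 := by
  obtain ⟨δ, hδ, hball⟩ := Metric.mem_nhds_iff.1 (mem_interior_iff_mem_nhds.1 hs)
  rw [Real.ball_eq_Ioo] at hball
  have ha : s - δ / 2 ∈ Dset P X Y t := hball ⟨by linarith, by linarith⟩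
  have hb : s + δ / 2 ∈ Dset P X Y t := hball ⟨by linarith, by linarith⟩
  set p := fun ω => t * Y ω - (s - δ / 2) * X ω
  set q := fun ω => t * Y ω - (s + δ / 2) * X ω
  set defect := fun ω => ENNReal.ofReal ((exp (p ω / 2) - exp (q ω / 2)) ^ 2)
  have hpointwise : ∀ ω, ENNReal.ofReal (exp (p ω)) + ENNReal.ofReal (exp (q ω)) =
      2 * ENNReal.ofReal (exp (t * Y ω - s * X ω)) + defect ω := by
    intro ω
    have hmid : (p ω + q ω) / 2 = t * Y ω - s * X ω := by simp only [p, q]; ring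
    rw [← ENNReal.ofReal_add (exp_pos _).le (exp_pos _).le, exp_add_exp_eq, hmid,
      ENNReal.ofReal_add (by positivity) (sq_nonneg _), ENNReal.ofReal_mul zero_le_two,
      ENNReal.ofReal_ofNat]
  have hintegral : ∫⁻ ω, ENNReal.ofReal (exp (p ω)) ∂P + ∫⁻ ω, ENNReal.ofReal (exp (q ω)) ∂P =
      2 * ∫⁻ ω, ENNReal.ofReal (exp (t * Y ω - s * X ω)) ∂P + ∫⁻ ω, defect ω ∂P := by
    rw [← lintegral_add_left (by fun_prop), ← lintegral_const_mul _ (by fun_prop),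
      ← lintegral_add_left (by fun_prop)]
    exact lintegral_congr hpointwise
  by_contra! hge
  have hdefect : ∫⁻ ω, defect ω ∂P = 0 := by
    refine le_antisymm (ENNReal.le_of_add_le_add_left (a := 2) ENNReal.ofNat_ne_top ?_) bot_le
    calc 2 + ∫⁻ ω, defect ω ∂P
        ≤ 2 * ∫⁻ ω, ENNReal.ofReal (exp (t * Y ω - s * X ω)) ∂P + ∫⁻ ω, defect ω ∂P := by
          gcongr
          simpa using mul_le_mul_right hge 2
      _ = _ := hintegral.symm
      _ ≤ 1 + 1 := add_le_add ha hb
      _ = 2 + 0 := by norm_num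
  apply hX0
  filter_upwards [(lintegral_eq_zero_iff (by fun_prop)).1 hdefect] with ω hω
  have hsq : (exp (p ω / 2) - exp (q ω / 2)) ^ 2 = 0 :=
    le_antisymm (ENNReal.ofReal_eq_zero.1 hω) (sq_nonneg _)
  have hpq : p ω = q ω := by
    have := exp_injective (sub_eq_zero.1 (pow_eq_zero_iff two_ne_zero |>.1 hsq))
    linarith
  have : δ * X ω = 0 := by simp only [p, q] at hpq; linarith
  exact (mul_eq_zero.1 this).resolve_left hδ.ne'

theorem integral_exp_lt_one_of_mem_interior (hX : Measurable X) (hY : Measurable Y)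
    (hX0 : ¬ ∀ᵐ ω ∂P, X ω = 0) (hs : s ∈ interior (Dset P X Y t)) :
    ∫ ω, exp (t * Y ω - s * X ω) ∂P < 1 := by
  rw [integral_exp_eq_toReal_lintegral (by fun_prop)]
  exact ENNReal.toReal_lt_of_lt_ofReal
    (by simpa using lintegral_exp_lt_one_of_mem_interior hX hY hX0 hs)

/-- For `a ≤ -k`, `E[e^{tY - aX}] ≥ E[e^{tY + kX}; X > 0]`, which tends to `∞` (Fatou) unless
`X ≤ 0` almost surely. -/
theorem bddBelow_Dset (hX : Measurable X) (hY : Measurable Y) (hpos : P {ω | 0 < X ω} ≠ 0) :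
    BddBelow (Dset P X Y t) := by
  by_contra hbdd
  set G := fun (k : ℕ) => {ω | 0 < X ω}.indicator fun ω => ENNReal.ofReal (exp (t * Y ω + k * X ω))
  have hG : ∀ k, Measurable (G k) := fun k =>
    (by fun_prop : Measurable _).indicator (measurableSet_lt measurable_const hX)
  have hGle : ∀ k, ∫⁻ ω, G k ω ∂P ≤ 1 := by
    intro k
    obtain ⟨a, ha, hak⟩ := not_bddBelow_iff.1 hbdd (-k)
    refine le_trans (lintegral_mono fun ω => ?_) ha
    simp only [G]
    by_cases hω : 0 < X ω
    · rw [indicator_of_mem (show ω ∈ {ω | 0 < X ω} from hω)]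
      gcongr
      nlinarith
    · rw [indicator_of_notMem (show ω ∉ {ω | 0 < X ω} from hω)]
      exact zero_le
  have hliminf : ∀ ω, {ω | 0 < X ω}.indicator (fun _ => ∞) ω ≤ liminf (fun k => G k ω) atTop := by
    intro ω
    by_cases hω : 0 < X ω
    · rw [indicator_of_mem (show ω ∈ {ω | 0 < X ω} from hω), top_le_iff]
      refine Tendsto.liminf_eq ?_
      simp only [G, indicator_of_mem (show ω ∈ {ω | 0 < X ω} from hω)]
      exact ENNReal.tendsto_ofReal_atTop.comp <| tendsto_exp_atTop.comp <|
        tendsto_atTop_add_const_left _ _ (tendsto_natCast_atTop_atTop.atTop_mul_const hω)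
    · simp [hω]
  have htop : ∞ * P {ω | 0 < X ω} ≤ 1 :=
    calc ∞ * P {ω | 0 < X ω}
        = ∫⁻ ω, {ω | 0 < X ω}.indicator (fun _ => ∞) ω ∂P :=
          (lintegral_indicator_const (measurableSet_lt measurable_const hX) _).symm
      _ ≤ ∫⁻ ω, liminf (fun k => G k ω) atTop ∂P := lintegral_mono hliminf
      _ ≤ liminf (fun k => ∫⁻ ω, G k ω ∂P) atTop := lintegral_liminf_le hG
      _ ≤ 1 := liminf_le_of_frequently_le' (.of_forall hGle)
  rw [ENNReal.top_mul hpos] at htop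
  exact absurd htop (by simp)

end TiltedMoment

section RenewalTime

variable {Ω : Type} {Xn Yn : ℕ → Ω → ℝ} {t s c x : ℝ} {ω : Ω}

theorem NN_spec (hx : 0 ≤ x) (hω : ∃ m, x < ∑ i ∈ Finset.range m, Xn i ω) :
    (∀ k ≤ NN Xn x ω, ∑ i ∈ Finset.range k, Xn i ω ≤ x) ∧
      x < ∑ i ∈ Finset.range (NN Xn x ω + 1), Xn i ω := by
  obtain ⟨m, hm⟩ := hω
  exact Nat.sSup_setOf_forall_le_spec (q := fun k => ∑ i ∈ Finset.range k, Xn i ω ≤ x)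
    (by simpa using hx) ⟨m, not_le.2 hm⟩ |>.imp id not_le.1

theorem NN_eq {n : ℕ} (h : ∀ k ≤ n, ∑ i ∈ Finset.range k, Xn i ω ≤ x)
    (hn : x < ∑ i ∈ Finset.range (n + 1), Xn i ω) : NN Xn x ω = n :=
  Nat.sSup_setOf_forall_le_eq h (not_le.2 hn)

/-- Holds because the first passage over the level `x` is strict. -/
theorem NN_eventually_eq (hx : 0 ≤ x) (hω : ∃ m, x < ∑ i ∈ Finset.range m, Xn i ω) :
    ∀ᶠ u in 𝓝[≥] x, NN Xn u ω = NN Xn x ω := by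
  obtain ⟨hle, hlt⟩ := NN_spec hx hω
  filter_upwards [self_mem_nhdsWithin, nhdsWithin_le_nhds (Iio_mem_nhds hlt)] with u hxu hu
  exact NN_eq (fun k hk => (hle k hk).trans hxu) hu

def expRenewalSum (Xn Yn : ℕ → Ω → ℝ) (t s c : ℝ) : Ω → ℝ≥0∞ :=
  renewalSum (fun p => ENNReal.ofReal (exp (t * p.2 - s * p.1)))
    (fun p => ENNReal.ofReal (exp (c * p.1))) (fun i ω => (Xn i ω, Yn i ω))

theorem measurable_expRenewalSum [MeasurableSpace Ω] (hXn : ∀ n, Measurable (Xn n))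
    (hYn : ∀ n, Measurable (Yn n)) : Measurable (expRenewalSum Xn Yn t s c) :=
  measurable_renewalSum (by fun_prop) (by fun_prop) (by fun_prop)

theorem ofReal_exp_mul_WW_le (hc : 0 ≤ c) (hsc : -s ≤ c) (hx : 0 ≤ x)
    (hω : ∃ m, x < ∑ i ∈ Finset.range m, Xn i ω) :
    ENNReal.ofReal (exp (t * WW Xn Yn x ω)) ≤
      ENNReal.ofReal (exp (s * x)) * expRenewalSum Xn Yn t s c ω := by
  obtain ⟨hle, hlt⟩ := NN_spec hx hω
  set n := NN Xn x ω
  rw [Finset.sum_range_succ] at hlt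
  have hexponent : t * WW Xn Yn x ω ≤
      s * x + ∑ i ∈ Finset.range n, (t * Yn i ω - s * Xn i ω) + c * Xn n ω := by
    have := mul_le_mul_add_mul_of_le_of_lt_add hc hsc (hle n le_rfl) hlt
    simp only [WW, Finset.sum_sub_distrib, ← Finset.mul_sum]
    linarith
  calc ENNReal.ofReal (exp (t * WW Xn Yn x ω))
      ≤ ENNReal.ofReal (exp (s * x) *
          ((∏ i ∈ Finset.range n, exp (t * Yn i ω - s * Xn i ω)) * exp (c * Xn n ω))) := by
        refine ENNReal.ofReal_le_ofReal ?_
        rw [← exp_sum, ← exp_add, ← exp_add, ← add_assoc]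
        exact exp_le_exp.2 hexponent
    _ = ENNReal.ofReal (exp (s * x)) *
          ((∏ i ∈ Finset.range n, ENNReal.ofReal (exp (t * Yn i ω - s * Xn i ω))) *
            ENNReal.ofReal (exp (c * Xn n ω))) := by
        rw [ENNReal.ofReal_mul (exp_pos _).le, ENNReal.ofReal_mul (by positivity),
          ENNReal.ofReal_prod_of_nonneg fun i _ => (exp_pos _).le]
    _ ≤ _ := by
        gcongr
        exact ENNReal.le_tsum (f := fun n => (∏ i ∈ Finset.range n,
          ENNReal.ofReal (exp (t * Yn i ω - s * Xn i ω))) * ENNReal.ofReal (exp (c * Xn n ω))) n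

theorem measurable_NN [MeasurableSpace Ω] (hXn : ∀ n, Measurable (Xn n)) (x : ℝ) :
    Measurable (NN Xn x) :=
  measurable_sSup_setOf fun _ => by fun_prop

theorem measurable_WW [MeasurableSpace Ω] (hXn : ∀ n, Measurable (Xn n))
    (hYn : ∀ n, Measurable (Yn n)) (x : ℝ) : Measurable (WW Xn Yn x) := by
  have hsum : Measurable fun p : Ω × ℕ => ∑ i ∈ Finset.range p.2, Yn i p.1 :=
    measurable_from_prod_countable_left fun n =>
      Finset.measurable_sum (Finset.range n) fun i _ => hYn i
  exact hsum.comp (measurable_id.prodMk (measurable_NN hXn x))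

end RenewalTime

section RenewalReward

variable {Ω : Type} [MeasurableSpace Ω] {P : Measure Ω} {X Y : Ω → ℝ} {Xn Yn : ℕ → Ω → ℝ}
  {t s c x : ℝ}

theorem ae_forall_exists_lt_sum [IsProbabilityMeasure P] (hXn : ∀ n, Measurable (Xn n))
    (hsup : P {ω | ∀ M : ℝ, ∃ n, M < ∑ i ∈ Finset.range n, Xn i ω} = 1) :
    ∀ᵐ ω ∂P, ∀ M : ℝ, ∃ n, M < ∑ i ∈ Finset.range n, Xn i ω := by
  have hset : {ω | ∀ M : ℝ, ∃ n, M < ∑ i ∈ Finset.range n, Xn i ω} =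
      {ω | ∀ m : ℕ, ∃ n, (m : ℝ) < ∑ i ∈ Finset.range n, Xn i ω} := by
    ext ω
    refine ⟨fun h m => h m, fun h M => ?_⟩
    obtain ⟨m, hm⟩ := exists_nat_ge M
    exact (h m).imp fun n hn => hm.trans_lt hn
  have hmeas : MeasurableSet {ω | ∀ M : ℝ, ∃ n, M < ∑ i ∈ Finset.range n, Xn i ω} := by
    rw [hset]
    exact measurableSet_setOfPred.2 (by fun_prop)
  rw [ae_iff_measure_eq hmeas.nullMeasurableSet, hsup, measure_univ]

theorem measure_setOf_pos_ne_zero [IsProbabilityMeasure P] (hX : Measurable X)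
    (hXn : ∀ n, Measurable (Xn n)) (hdist : ∀ n, P.map (Xn n) = P.map X)
    (hsup : ∀ᵐ ω ∂P, ∃ n, 0 < ∑ i ∈ Finset.range n, Xn i ω) :
    P {ω | 0 < X ω} ≠ 0 := by
  intro h0
  have hnonpos : ∀ᵐ ω ∂P, ∀ i, Xn i ω ≤ 0 := by
    refine ae_all_iff.2 fun i => ?_
    simp only [ae_iff, not_le]
    change P (Xn i ⁻¹' Ioi 0) = 0
    rwa [← Measure.map_apply (hXn i) measurableSet_Ioi, hdist i,
      Measure.map_apply hX measurableSet_Ioi]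
  obtain ⟨ω, ⟨n, hn⟩, hω⟩ := (hsup.and hnonpos).exists
  exact hn.not_ge (Finset.sum_nonpos fun i _ => hω i)

theorem mgfW_le_mul_lintegral_expRenewalSum (hXn : ∀ n, Measurable (Xn n))
    (hYn : ∀ n, Measurable (Yn n))
    (hsup : ∀ᵐ ω ∂P, ∀ M : ℝ, ∃ n, M < ∑ i ∈ Finset.range n, Xn i ω)
    (hc : 0 ≤ c) (hsc : -s ≤ c) (hx : 0 ≤ x) :
    MgfW P Xn Yn x t ≤ ENNReal.ofReal (exp (s * x)) *
      ∫⁻ ω, expRenewalSum Xn Yn t s c ω ∂P := by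
  rw [← lintegral_const_mul _ (measurable_expRenewalSum hXn hYn)]
  exact lintegral_mono_ae (hsup.mono fun ω hω => ofReal_exp_mul_WW_le hc hsc hx (hω x))

theorem lintegral_expRenewalSum (hX : Measurable X) (hY : Measurable Y)
    (hXn : ∀ n, Measurable (Xn n)) (hYn : ∀ n, Measurable (Yn n))
    (hiid : ∀ n, Measure.map (fun ω => (Xn n ω, Yn n ω)) P = Measure.map (fun ω => (X ω, Y ω)) P)
    (hindep : iIndepFun (fun n ω => (Xn n ω, Yn n ω)) P) :
    ∫⁻ ω, expRenewalSum Xn Yn t s c ω ∂P =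
      (1 - ∫⁻ ω, ENNReal.ofReal (exp (t * Y ω - s * X ω)) ∂P)⁻¹ *
        ∫⁻ ω, ENNReal.ofReal (exp (c * X ω)) ∂P := by
  unfold expRenewalSum
  rw [lintegral_renewalSum (fun i => (hXn i).prodMk (hYn i)) hindep hiid (by fun_prop)
    (by fun_prop), lintegral_map (by fun_prop) (hX.prodMk hY),
    lintegral_map (by fun_prop) (hX.prodMk hY)]

theorem continuousWithinAt_mgfW (hXn : ∀ n, Measurable (Xn n)) (hYn : ∀ n, Measurable (Yn n))
    (hsup : ∀ᵐ ω ∂P, ∀ M : ℝ, ∃ n, M < ∑ i ∈ Finset.range n, Xn i ω)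
    (hc : 0 ≤ c) (hsc : -s ≤ c)
    (hfin : ∫⁻ ω, expRenewalSum Xn Yn t s c ω ∂P ≠ ∞)
    (hx : 0 ≤ x) :
    ContinuousWithinAt (fun u => (MgfW P Xn Yn u t).toReal) (Ici x) x := by
  have hMx : MgfW P Xn Yn x t ≠ ∞ :=
    ne_top_of_le_ne_top (ENNReal.mul_ne_top ENNReal.ofReal_ne_top hfin)
      (mgfW_le_mul_lintegral_expRenewalSum hXn hYn hsup hc hsc hx)
  refine (ENNReal.tendsto_toReal hMx).comp ?_
  refine tendsto_lintegral_filter_of_dominated_convergence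
    (fun ω => ENNReal.ofReal (exp (|s| * (x + 1))) * expRenewalSum Xn Yn t s c ω)
    (.of_forall fun u => by have := measurable_WW hXn hYn u; fun_prop) ?_ ?_ ?_
  · filter_upwards [self_mem_nhdsWithin, nhdsWithin_le_nhds (Iio_mem_nhds (lt_add_one x))]
      with u (hxu : x ≤ u) (hu : u < x + 1)
    filter_upwards [hsup] with ω hω
    refine (ofReal_exp_mul_WW_le hc hsc (hx.trans hxu) (hω u)).trans ?_
    gcongr
    · linarith
    · exact le_abs_self s
  · rw [lintegral_const_mul _ (measurable_expRenewalSum hXn hYn)]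
    exact ENNReal.mul_ne_top ENNReal.ofReal_ne_top hfin
  · filter_upwards [hsup] with ω hω
    exact tendsto_const_nhds.congr' <|
      (NN_eventually_eq hx (hω x)).mono fun u hu => by simp only [WW, hu]

theorem lintegral_expRenewalSum_ne_top (hX : Measurable X) (hY : Measurable Y)
    (hXn : ∀ n, Measurable (Xn n)) (hYn : ∀ n, Measurable (Yn n))
    (hiid : ∀ n, Measure.map (fun ω => (Xn n ω, Yn n ω)) P = Measure.map (fun ω => (X ω, Y ω)) P)
    (hindep : iIndepFun (fun n ω => (Xn n ω, Yn n ω)) P)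
    (hX0 : ¬ ∀ᵐ ω ∂P, X ω = 0) (hs : s ∈ interior (Dset P X Y t))
    (hA : ∫⁻ ω, ENNReal.ofReal (exp (c * X ω)) ∂P ≠ ∞) :
    ∫⁻ ω, expRenewalSum Xn Yn t s c ω ∂P ≠ ∞ := by
  rw [lintegral_expRenewalSum hX hY hXn hYn hiid hindep]
  exact ENNReal.mul_ne_top (ENNReal.inv_ne_top.2
    (tsub_pos_of_lt (lintegral_exp_lt_one_of_mem_interior hX hY hX0 hs)).ne') hA

theorem mgfW_le_ofReal_mul_exp (hX : Measurable X) (hY : Measurable Y)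
    (hXn : ∀ n, Measurable (Xn n)) (hYn : ∀ n, Measurable (Yn n))
    (hiid : ∀ n, Measure.map (fun ω => (Xn n ω, Yn n ω)) P = Measure.map (fun ω => (X ω, Y ω)) P)
    (hindep : iIndepFun (fun n ω => (Xn n ω, Yn n ω)) P)
    (hX0 : ¬ ∀ᵐ ω ∂P, X ω = 0) (hsup : ∀ᵐ ω ∂P, ∀ M : ℝ, ∃ n, M < ∑ i ∈ Finset.range n, Xn i ω)
    (hc : 0 ≤ c) (hsc : -s ≤ c) (hs : s ∈ interior (Dset P X Y t))
    (hA : ∫⁻ ω, ENNReal.ofReal (exp (c * X ω)) ∂P ≠ ∞) (hx : 0 ≤ x) :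
    MgfW P Xn Yn x t ≤ ENNReal.ofReal
      (((∫ ω, exp (c * X ω) ∂P) + 1) / (1 - ∫ ω, exp (t * Y ω - s * X ω) ∂P) * exp (s * x)) := by
  set ρ := ∫⁻ ω, ENNReal.ofReal (exp (t * Y ω - s * X ω)) ∂P
  set A := ∫⁻ ω, ENNReal.ofReal (exp (c * X ω)) ∂P
  have hρ : ρ < 1 := lintegral_exp_lt_one_of_mem_interior hX hY hX0 hs
  have hρ_real : 0 < 1 - ρ.toReal := sub_pos.2 (ENNReal.toReal_lt_of_lt_ofReal (by simpa))
  have h1ρ : ENNReal.ofReal (1 - ρ.toReal) = 1 - ρ := by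
    rw [ENNReal.ofReal_sub _ ENNReal.toReal_nonneg, ENNReal.ofReal_one,
      ENNReal.ofReal_toReal hρ.ne_top]
  rw [integral_exp_eq_toReal_lintegral (by fun_prop), integral_exp_eq_toReal_lintegral (by fun_prop)]
  calc MgfW P Xn Yn x t ≤ ENNReal.ofReal (exp (s * x)) * ((1 - ρ)⁻¹ * A) := by
        rw [← lintegral_expRenewalSum hX hY hXn hYn hiid hindep]
        exact mgfW_le_mul_lintegral_expRenewalSum hXn hYn hsup hc hsc hx
    _ = ENNReal.ofReal (A.toReal / (1 - ρ.toReal) * exp (s * x)) := by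
        rw [ENNReal.ofReal_mul (by positivity), ENNReal.ofReal_div_of_pos hρ_real,
          ENNReal.ofReal_toReal hA, h1ρ, div_eq_mul_inv, mul_comm, mul_comm A]
    _ ≤ _ := by gcongr; linarith

end RenewalReward

theorem mgf_exponential_upper_bound_general
    {Ω : Type} [MeasurableSpace Ω] (P : Measure Ω) [IsProbabilityMeasure P]
    (X Y : Ω → ℝ) (Xn Yn : ℕ → Ω → ℝ)
    (hX : Measurable X) (hY : Measurable Y)
    (hXn : ∀ n, Measurable (Xn n)) (hYn : ∀ n, Measurable (Yn n))
    (hiid : ∀ n, Measure.map (fun ω => (Xn n ω, Yn n ω)) P = Measure.map (fun ω => (X ω, Y ω)) P)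
    (hindep : iIndepFun (fun n ω => (Xn n ω, Yn n ω)) P)
    (hXnondeg : ¬ ∃ c : ℝ, P {ω | X ω = c} = 1)
    (hsup : P {ω | ∀ M : ℝ, ∃ n, M < ∑ i ∈ Finset.range n, Xn i ω} = 1)
    (t : ℝ)
    (hβ : betaX P X < (hfun P X Y t : EReal))
    (hint : (interior (Dset P X Y t)).Nonempty) :
    -- `x ↦ M_x(t)` is right-continuous on `[0, ∞)`
    (∀ x ≥ (0:ℝ), ContinuousWithinAt (fun u : ℝ => (MgfW P Xn Yn u t).toReal) (Set.Ici x) x) ∧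
    -- the exponential upper bound
    (∀ ε > (0:ℝ), hfun P X Y t + ε ∈ interior (Dset P X Y t) →
      (∃ K > (0:ℝ), ∀ x > (0:ℝ),
        MgfW P Xn Yn x t ≤ ENNReal.ofReal (K * Real.exp ((hfun P X Y t + ε) * x))) ∧
      -- the explicit constant `K_ε = H(h(t)) / (1 - ρ(t,ε))`
      ((0 ≤ hfun P X Y t ∨ ε < |hfun P X Y t|) → ∀ x > (0:ℝ),
        MgfW P Xn Yn x t ≤ ENNReal.ofReal
          ((((∫ ω, Real.exp (-(min 0 (hfun P X Y t)) * X ω) ∂P) + 1) /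
            (1 - ∫ ω, Real.exp (t * Y ω - (hfun P X Y t + ε) * X ω) ∂P)) *
            Real.exp ((hfun P X Y t + ε) * x)))) := by
  set h := hfun P X Y t
  have hsup' := ae_forall_exists_lt_sum hXn hsup
  have hX0 : ¬ ∀ᵐ ω ∂P, X ω = 0 := fun h0 => hXnondeg ⟨0, by
    rwa [ae_iff_measure_eq (measurableSet_eq_fun hX measurable_const).nullMeasurableSet,
      measure_univ] at h0⟩
  have hc : 0 ≤ -min 0 h := neg_nonneg.2 (min_le_left 0 h)
  have hsc : ∀ s, h < s → -s ≤ -min 0 h := fun s hs => by linarith [min_le_right 0 h]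
  have hA := (lintegral_exp_neg_min_mul_lt_top hX hβ).ne
  refine ⟨fun x hx => ?_, fun ε hε hmem => ?_⟩
  · have hdist n : P.map (Xn n) = P.map X := by
      have := congrArg (Measure.map Prod.fst) (hiid n)
      rwa [Measure.map_map measurable_fst ((hXn n).prodMk (hYn n)),
        Measure.map_map measurable_fst (hX.prodMk hY)] at this
    obtain ⟨s, hs, hsD⟩ := exists_csInf_lt_mem_interior (bddBelow_Dset hX hY
      (measure_setOf_pos_ne_zero hX hXn hdist (hsup'.mono fun _ hω => hω 0))) hint
    exact continuousWithinAt_mgfW hXn hYn hsup' hc (hsc s hs)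
      (lintegral_expRenewalSum_ne_top hX hY hXn hYn hiid hindep hX0 hsD hA) hx
  · have hbound x (hx : 0 < x) := mgfW_le_ofReal_mul_exp hX hY hXn hYn hiid hindep hX0 hsup' hc
      (hsc _ (lt_add_of_pos_right h hε)) hmem hA hx.le
    have hρ := integral_exp_lt_one_of_mem_interior hX hY hX0 hmem
    refine ⟨⟨_, div_pos ?_ (sub_pos.2 hρ), hbound⟩, fun _ => hbound⟩
    have hH : 0 ≤ ∫ ω, exp (-min 0 h * X ω) ∂P := integral_nonneg fun ω => (exp_pos _).le
    linarith

/-- Lemma 6.2: upper bound for the exponential rate of `M_x(t)`. -/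
theorem mgf_exponential_upper_bound
    {Ω : Type} [MeasurableSpace Ω] (P : Measure Ω) [IsProbabilityMeasure P]
    (X Y : Ω → ℝ) (Xn Yn : ℕ → Ω → ℝ)
    (hX : Measurable X) (hY : Measurable Y)
    (hXn : ∀ n, Measurable (Xn n)) (hYn : ∀ n, Measurable (Yn n))
    (hiid : ∀ n, Measure.map (fun ω => (Xn n ω, Yn n ω)) P = Measure.map (fun ω => (X ω, Y ω)) P)
    (hindep : iIndepFun (fun n ω => (Xn n ω, Yn n ω)) P)
    (hXnondeg : ¬ ∃ c : ℝ, P {ω | X ω = c} = 1)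
    (hYnondeg : ¬ ∃ c : ℝ, P {ω | Y ω = c} = 1)
    (hsup : P {ω | ∀ M : ℝ, ∃ n, M < ∑ i ∈ Finset.range n, Xn i ω} = 1)
    (t : ℝ)
    (hβ : betaX P X < (hfun P X Y t : EReal))
    (hne : (Dset P X Y t).Nonempty)
    (hint : (interior (Dset P X Y t)).Nonempty) :
    -- `x ↦ M_x(t)` is right-continuous on `[0, ∞)`
    (∀ x ≥ (0:ℝ), ContinuousWithinAt (fun u : ℝ => (MgfW P Xn Yn u t).toReal) (Set.Ici x) x) ∧
    -- the exponential upper bound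
    (∀ ε > (0:ℝ), hfun P X Y t + ε ∈ interior (Dset P X Y t) →
      (∃ K > (0:ℝ), ∀ x > (0:ℝ),
        MgfW P Xn Yn x t ≤ ENNReal.ofReal (K * Real.exp ((hfun P X Y t + ε) * x))) ∧
      -- the explicit constant `K_ε = H(h(t)) / (1 - ρ(t,ε))`
      ((0 ≤ hfun P X Y t ∨ ε < |hfun P X Y t|) → ∀ x > (0:ℝ),
        MgfW P Xn Yn x t ≤ ENNReal.ofReal
          ((((∫ ω, Real.exp (-(min 0 (hfun P X Y t)) * X ω) ∂P) + 1) /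
            (1 - ∫ ω, Real.exp (t * Y ω - (hfun P X Y t + ε) * X ω) ∂P)) *
            Real.exp ((hfun P X Y t + ε) * x)))) :=
  mgf_exponential_upper_bound_general P X Y Xn Yn hX hY hXn hYn hiid hindep hXnondeg hsup t hβ hint
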